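/- arXiv:2104.00625 — 4 statements merged into one kernel-verified Lean document; each statement's English description precedes it below -/
import Mathlib

section
/- Let D be an n×n real symmetric positive definite matrix, M an n×n real matrix, β ∈ ℝⁿ, ε > 0, α ∈ ℝ, and λ > 0. If the (n+1+n)×(n+1+n) block matrix with block rows [λ•D, 0, Mᵀ*D], [0, (α²−λ)ε² (a 1×1 block), βᵀ*D (as a row)], [D*M, D*β (as a column), D] is positive semidefinite, then for every x ∈ ℝⁿ with xᵀ D x ≤ ε² one has (M x + β)ᵀ D (M x + β) ≤ α² ε². -/
open Matrix

/-! Test the LMI against the vector `(x, 1, -(M x + β))`. The two off-diagonal block pairs each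
contribute `-(M x + β)ᵀ D (M x + β)`, one of them cancelling the bottom-right block `D`, so the
quadratic form equals `λ xᵀ D x + (α² - λ) ε² - (M x + β)ᵀ D (M x + β) ≥ 0`. With `xᵀ D x ≤ ε²` and
`λ ≥ 0` this gives the bound `α² ε²`. -/

namespace Matrix

variable {R ι l m : Type*}

theorem sumElim_dotProduct_fromBlocks_mulVec_sumElim [Fintype l] [Fintype m]
    [NonUnitalNonAssocSemiring R] (A : Matrix l l R) (B : Matrix l m R) (C : Matrix m l R)
    (D : Matrix m m R) (u : l → R) (v : m → R) :
    Sum.elim u v ⬝ᵥ fromBlocks A B C D *ᵥ Sum.elim u v =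
      u ⬝ᵥ A *ᵥ u + u ⬝ᵥ B *ᵥ v + (v ⬝ᵥ C *ᵥ u + v ⬝ᵥ D *ᵥ v) := by
  simp only [fromBlocks_mulVec, Sum.elim_comp_inl, Sum.elim_comp_inr,
    sumElim_dotProduct_sumElim, dotProduct_add]

variable [Fintype ι] [CommRing R]

/-- The LMI (6b) of the paper, with `c` standing for `(α² - λ) ε²`. -/
def contractionLMI (D M : Matrix ι ι R) (β : ι → R) (lam c : R) :
    Matrix ((ι ⊕ Fin 1) ⊕ ι) ((ι ⊕ Fin 1) ⊕ ι) R :=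
  fromBlocks (fromBlocks (lam • D) 0 0 (c • 1))
    (fromRows (Mᵀ * D) (replicateRow (Fin 1) (β ᵥ* D)))
    (fromCols (D * M) (replicateCol (Fin 1) (D *ᵥ β))) D

theorem dotProduct_contractionLMI_mulVec (D M : Matrix ι ι R) (β : ι → R) (lam c : R)
    (x : ι → R) :
    let v := Sum.elim (Sum.elim x 1) (-(M *ᵥ x + β))
    v ⬝ᵥ contractionLMI D M β lam c *ᵥ v =
      lam * (x ⬝ᵥ D *ᵥ x) + c - (M *ᵥ x + β) ⬝ᵥ D *ᵥ (M *ᵥ x + β) := by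
  have hrow (y : ι → R) : Sum.elim x 1 ⬝ᵥ
      fromRows (Mᵀ * D) (replicateRow (Fin 1) (β ᵥ* D)) *ᵥ y = (M *ᵥ x + β) ⬝ᵥ D *ᵥ y := by
    rw [fromRows_mulVec, sumElim_dotProduct_sumElim, replicateRow_mulVec_eq_const,
      ← mulVec_mulVec, dotProduct_mulVec x, vecMul_transpose, ← dotProduct_mulVec,
      add_dotProduct, dotProduct_mulVec β, one_dotProduct, Fin.sum_univ_one, Function.const_apply]
  have hcol (y : ι → R) : y ⬝ᵥ fromCols (D * M) (replicateCol (Fin 1) (D *ᵥ β)) *ᵥ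
      Sum.elim x 1 = y ⬝ᵥ D *ᵥ (M *ᵥ x + β) := by
    have hβ : replicateCol (Fin 1) (D *ᵥ β) *ᵥ 1 = D *ᵥ β := by
      ext i
      simp [mulVec, dotProduct]
    rw [fromCols_mulVec_sumElim, hβ, ← mulVec_mulVec, ← mulVec_add]
  intro v
  simp only [v, contractionLMI, sumElim_dotProduct_fromBlocks_mulVec_sumElim, hrow, hcol,
    mulVec_neg, dotProduct_neg, neg_dotProduct, neg_neg, zero_mulVec, dotProduct_zero,
    smul_mulVec, one_mulVec, dotProduct_smul, one_dotProduct_one, Fintype.card_fin,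
    Nat.cast_one, smul_eq_mul]
  ring

theorem PosSemidef.affine_dotProduct_mulVec_le [PartialOrder R] [IsOrderedRing R] [StarRing R]
    [TrivialStar R] {D M : Matrix ι ι R} {β : ι → R} {lam c : R}
    (h : (contractionLMI D M β lam c).PosSemidef) (x : ι → R) :
    (M *ᵥ x + β) ⬝ᵥ D *ᵥ (M *ᵥ x + β) ≤ lam * (x ⬝ᵥ D *ᵥ x) + c := by
  have := h.dotProduct_mulVec_nonneg (Sum.elim (Sum.elim x 1) (-(M *ᵥ x + β)))
  rw [star_trivial, dotProduct_contractionLMI_mulVec] at this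
  exact sub_nonneg.mp this

end Matrix

theorem contraction_lmi_general {n : ℕ}
    (D M : Matrix (Fin n) (Fin n) ℝ) (β : Fin n → ℝ)
    (ε α lam : ℝ) (hlam : 0 < lam)
    (hLMI : (Matrix.fromBlocks
        (Matrix.fromBlocks (lam • D) 0 0
          (((α ^ 2 - lam) * ε ^ 2) • (1 : Matrix (Fin 1) (Fin 1) ℝ)))
        (Matrix.fromRows (Mᵀ * D) (Matrix.replicateRow (Fin 1) (β ᵥ* D)))
        (Matrix.fromCols (D * M) (Matrix.replicateCol (Fin 1) (D *ᵥ β)))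
        D).PosSemidef) :
    ∀ x : Fin n → ℝ, x ⬝ᵥ D *ᵥ x ≤ ε ^ 2 →
      (M *ᵥ x + β) ⬝ᵥ D *ᵥ (M *ᵥ x + β) ≤ α ^ 2 * ε ^ 2 := by
  intro x hx
  calc (M *ᵥ x + β) ⬝ᵥ D *ᵥ (M *ᵥ x + β)
      ≤ lam * (x ⬝ᵥ D *ᵥ x) + (α ^ 2 - lam) * ε ^ 2 := hLMI.affine_dotProduct_mulVec_le x
    _ ≤ lam * ε ^ 2 + (α ^ 2 - lam) * ε ^ 2 := by gcongr
    _ = α ^ 2 * ε ^ 2 := by ring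

/-- **Contraction LMI.** If the 3×3 block matrix
`[[λ•D, 0, Mᵀ*D], [0, (α²−λ)ε², βᵀ*D], [D*M, D*β, D]]`
(with `D` symmetric positive definite, `ε > 0`, `λ > 0`) is positive
semidefinite, then the affine map `x ↦ M x + β` sends the ellipsoid
`{x : xᵀ D x ≤ ε²}` into the ellipsoid `{x : xᵀ D x ≤ α² ε²}`. -/
theorem contraction_lmi {n : ℕ}
    (D M : Matrix (Fin n) (Fin n) ℝ) (β : Fin n → ℝ)
    (ε α lam : ℝ) (hD : D.PosDef) (hε : 0 < ε) (hlam : 0 < lam)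
    (hLMI : (Matrix.fromBlocks
        (Matrix.fromBlocks (lam • D) 0 0
          (((α ^ 2 - lam) * ε ^ 2) • (1 : Matrix (Fin 1) (Fin 1) ℝ)))
        (Matrix.fromRows (Mᵀ * D) (Matrix.replicateRow (Fin 1) (β ᵥ* D)))
        (Matrix.fromCols (D * M) (Matrix.replicateCol (Fin 1) (D *ᵥ β)))
        D).PosSemidef) :
    ∀ x : Fin n → ℝ, x ⬝ᵥ D *ᵥ x ≤ ε ^ 2 →
      (M *ᵥ x + β) ⬝ᵥ D *ᵥ (M *ᵥ x + β) ≤ α ^ 2 * ε ^ 2 :=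
  contraction_lmi_general D M β ε α lam hlam hLMI
end

section
/- Let δ ∈ [0,1] and γ ∈ ℝ satisfy (gaussianReal 0 1) (Set.Iic (−|γ|/2)) ≥ ENNReal.ofReal ((1 − δ)/2). Then there exists a probability measure W on ℝ × ℝ whose first marginal is gaussianReal 0 1 and whose second marginal is gaussianReal γ 1, such that W {p : ℝ × ℝ | p.1 = p.2} ≥ ENNReal.ofReal (1 − δ). -/
open MeasureTheory ProbabilityTheory Set
open scoped ENNReal NNReal

/-! The maximal coupling: the common part `min φ₀ φ_γ` of the two Gaussian densities is put on the
diagonal, and the two remainders, which have equal mass, are coupled independently. Below the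
midpoint `γ / 2` the minimum is one density and above it the other, so the common part has mass
`2 Φ(-|γ| / 2)`. -/

namespace MeasureTheory.Measure

variable {α : Type*} [MeasurableSpace α]

lemma inv_measure_univ_smul_smul (ρ : Measure α) [IsFiniteMeasure ρ] :
    (ρ univ)⁻¹ • (ρ univ) • ρ = ρ := by
  by_cases hρ : ρ = 0
  · simp [hρ]
  · rw [smul_smul, ENNReal.inv_mul_cancel (by simpa using hρ) (measure_ne_top ρ univ), one_smul]

theorem exists_coupling_diagonal_ge (μ₁ μ₂ ν : Measure α) [IsProbabilityMeasure μ₁]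
    [IsProbabilityMeasure μ₂] (h₁ : ν ≤ μ₁) (h₂ : ν ≤ μ₂) :
    ∃ W : Measure (α × α), IsProbabilityMeasure W ∧ W.map Prod.fst = μ₁ ∧
      W.map Prod.snd = μ₂ ∧ ν univ ≤ W {p | p.1 = p.2} := by
  have : IsFiniteMeasure ν := isFiniteMeasure_of_le μ₁ h₁
  have : IsFiniteMeasure (μ₁ - ν) := isFiniteMeasure_of_le μ₁ sub_le
  have : IsFiniteMeasure (μ₂ - ν) := isFiniteMeasure_of_le μ₂ sub_le
  have hμ₁ : μ₁ - ν + ν = μ₁ := sub_add_cancel_of_le h₁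
  have hμ₂ : μ₂ - ν + ν = μ₂ := sub_add_cancel_of_le h₂
  have hmass : (μ₁ - ν) univ = (μ₂ - ν) univ := by
    have h : (μ₁ - ν + ν) univ = (μ₂ - ν + ν) univ := by rw [hμ₁, hμ₂, measure_univ, measure_univ]
    simp only [add_apply] at h
    exact (ENNReal.add_left_inj (measure_ne_top ν univ)).mp h
  have hdiag : Measurable fun x : α ↦ (x, x) := measurable_id.prodMk measurable_id
  set W := ν.map (fun x ↦ (x, x)) + ((μ₁ - ν) univ)⁻¹ • (μ₁ - ν).prod (μ₂ - ν) with hW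
  have hfst : W.map Prod.fst = μ₁ := by
    rw [hW, Measure.map_add _ _ measurable_fst, Measure.map_smul, map_fst_prod,
      map_map measurable_fst hdiag, ← hmass, inv_measure_univ_smul_smul, add_comm]
    exact (congrArg (μ₁ - ν + ·) map_id).trans hμ₁
  have hsnd : W.map Prod.snd = μ₂ := by
    rw [hW, Measure.map_add _ _ measurable_snd, Measure.map_smul, map_snd_prod,
      map_map measurable_snd hdiag, hmass, inv_measure_univ_smul_smul, add_comm]
    exact (congrArg (μ₂ - ν + ·) map_id).trans hμ₂
  have : IsProbabilityMeasure (W.map Prod.fst) := hfst ▸ inferInstance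
  refine ⟨W, isProbabilityMeasure_of_map Prod.fst, hfst, hsnd, ?_⟩
  calc ν univ = ν ((fun x ↦ (x, x)) ⁻¹' {p : α × α | p.1 = p.2}) := by simp
    _ ≤ ν.map (fun x ↦ (x, x)) {p | p.1 = p.2} := le_map_apply hdiag.aemeasurable _
    _ ≤ W {p | p.1 = p.2} := by rw [add_apply]; exact le_self_add

end MeasureTheory.Measure

namespace ProbabilityTheory

lemma gaussianPDF_le_gaussianPDF {μ μ' x : ℝ} (v : ℝ≥0) (h : |x - μ'| ≤ |x - μ|) :
    gaussianPDF μ v x ≤ gaussianPDF μ' v x := by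
  unfold gaussianPDF gaussianPDFReal
  gcongr ENNReal.ofReal (_ * Real.exp (-?_ / _))
  exact sq_le_sq.mpr h

lemma gaussianReal_Iic (μ : ℝ) (v : ℝ≥0) (x : ℝ) :
    gaussianReal μ v (Iic x) = gaussianReal 0 v (Iic (x - μ)) := by
  rw [← zero_add μ, ← gaussianReal_map_add_const μ, Measure.map_apply (measurable_add_const μ)
    measurableSet_Iic, zero_add]
  congr 1
  ext t
  simp [le_sub_iff_add_le]

lemma gaussianReal_Ioi (μ : ℝ) (v : ℝ≥0) (x : ℝ) :
    gaussianReal μ v (Ioi x) = gaussianReal 0 v (Iio (μ - x)) := by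
  rw [← sub_zero μ, ← gaussianReal_map_const_sub μ, Measure.map_apply (measurable_const_sub μ)
    measurableSet_Ioi, sub_zero]
  congr 1
  ext t
  simp [lt_sub_comm]

lemma lintegral_min_gaussianPDF {v : ℝ≥0} (hv : v ≠ 0) (a b : ℝ) :
    ∫⁻ x, min (gaussianPDF a v x) (gaussianPDF b v x) =
      2 * gaussianReal 0 v (Iic (-|a - b| / 2)) := by
  wlog hab : a ≤ b generalizing a b
  · simpa [min_comm, abs_sub_comm] using this b a (le_of_not_ge hab)
  have : NullSingletonClass (gaussianReal 0 v) := nullSingletonClass_gaussianReal hv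
  set m := (a + b) / 2
  have hleft : ∫⁻ x in Iic m, min (gaussianPDF a v x) (gaussianPDF b v x) =
      ∫⁻ x in Iic m, gaussianPDF b v x := by
    refine setLIntegral_congr_fun measurableSet_Iic fun x hx ↦ min_eq_right ?_
    exact gaussianPDF_le_gaussianPDF v (sq_le_sq.mp (by simp only [mem_Iic, m] at hx; nlinarith))
  have hright : ∫⁻ x in Ioi m, min (gaussianPDF a v x) (gaussianPDF b v x) =
      ∫⁻ x in Ioi m, gaussianPDF a v x := by
    refine setLIntegral_congr_fun measurableSet_Ioi fun x hx ↦ min_eq_left ?_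
    exact gaussianPDF_le_gaussianPDF v (sq_le_sq.mp (by simp only [mem_Ioi, m] at hx; nlinarith))
  rw [← lintegral_add_compl _ measurableSet_Iic, compl_Iic, hleft, hright,
    ← gaussianReal_apply b hv, ← gaussianReal_apply a hv, gaussianReal_Iic, gaussianReal_Ioi,
    measure_congr Iio_ae_eq_Iic, two_mul, abs_of_nonpos (by linarith)]
  congr 3 <;> ring

end ProbabilityTheory

theorem gaussian_shift_coupling_delta_general (δ γ : ℝ)
    (hγ : (gaussianReal 0 1) (Set.Iic (-|γ| / 2)) ≥
      ENNReal.ofReal ((1 - δ) / 2)) :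
    ∃ W : Measure (ℝ × ℝ), IsProbabilityMeasure W ∧
      W.map Prod.fst = gaussianReal 0 1 ∧
      W.map Prod.snd = gaussianReal γ 1 ∧
      W {p : ℝ × ℝ | p.1 = p.2} ≥ ENNReal.ofReal (1 - δ) := by
  set overlap := volume.withDensity fun x ↦ min (gaussianPDF 0 1 x) (gaussianPDF γ 1 x)
  have h₀ : overlap ≤ gaussianReal 0 1 := by
    rw [gaussianReal_of_var_ne_zero 0 one_ne_zero]
    exact withDensity_mono (ae_of_all _ fun _ ↦ min_le_left _ _)
  have h₁ : overlap ≤ gaussianReal γ 1 := by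
    rw [gaussianReal_of_var_ne_zero γ one_ne_zero]
    exact withDensity_mono (ae_of_all _ fun _ ↦ min_le_right _ _)
  obtain ⟨W, hW, hfst, hsnd, hdiag⟩ := Measure.exists_coupling_diagonal_ge _ _ _ h₀ h₁
  refine ⟨W, hW, hfst, hsnd, le_trans ?_ hdiag⟩
  rw [withDensity_apply _ MeasurableSet.univ, Measure.restrict_univ,
    lintegral_min_gaussianPDF one_ne_zero, zero_sub, abs_neg]
  calc ENNReal.ofReal (1 - δ) = 2 * ENNReal.ofReal ((1 - δ) / 2) := by
        rw [← ENNReal.ofReal_ofNat 2, ← ENNReal.ofReal_mul zero_le_two]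
        ring_nf
    _ ≤ 2 * gaussianReal 0 1 (Iic (-|γ| / 2)) := by gcongr

/-- **Coupling with deviation `δ`.** If the shift `γ` satisfies
`Φ(−|γ|/2) ≥ (1−δ)/2` with `δ ∈ [0,1]`, then there is a coupling `W` of
`N(0,1)` and `N(γ,1)` whose diagonal event has probability at least `1−δ`. -/
theorem gaussian_shift_coupling_delta (δ γ : ℝ)
    (hδ0 : 0 ≤ δ) (hδ1 : δ ≤ 1)
    (hγ : (gaussianReal 0 1) (Set.Iic (-|γ| / 2)) ≥
      ENNReal.ofReal ((1 - δ) / 2)) :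
    ∃ W : Measure (ℝ × ℝ), IsProbabilityMeasure W ∧
      W.map Prod.fst = gaussianReal 0 1 ∧
      W.map Prod.snd = gaussianReal γ 1 ∧
      W {p : ℝ × ℝ | p.1 = p.2} ≥ ENNReal.ofReal (1 - δ) :=
  gaussian_shift_coupling_delta_general δ γ hγ
end

section
/- For every γ ≥ 0, every probability measure W on ℝ × ℝ whose first marginal is gaussianReal 0 1 and whose second marginal is gaussianReal γ 1 satisfies W {p : ℝ × ℝ | p.1 = p.2} ≤ 2 * (gaussianReal 0 1) (Set.Iic (−γ/2)). -/
open MeasureTheory ProbabilityTheory Set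
open scoped NNReal

/-! On the diagonal, either the second coordinate is at most the midpoint `γ / 2` of the two
means or the first one exceeds it. The first event has probability `Φ(-γ/2)` under the second
marginal `N(γ, 1)`, the second has probability `Φ(-γ/2)` under the first marginal `N(0, 1)` by
symmetry of the standard Gaussian. -/

lemma measure_diagonal_le_snd_Iic_add_fst_Ioi {α : Type*} [MeasurableSpace α] [LinearOrder α]
    (W : Measure (α × α)) (c : α) :
    W {p | p.1 = p.2} ≤ W (Prod.snd ⁻¹' Iic c) + W (Prod.fst ⁻¹' Ioi c) := by
  have hcover : {p : α × α | p.1 = p.2} ⊆ Prod.snd ⁻¹' Iic c ∪ Prod.fst ⁻¹' Ioi c := by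
    rintro ⟨x, y⟩ (rfl : x = y)
    exact le_or_gt x c
  exact (measure_mono hcover).trans (measure_union_le _ _)

lemma gaussianReal_Iic_eq_gaussianReal_zero_Iic_sub (μ : ℝ) (v : ℝ≥0) (x : ℝ) :
    gaussianReal μ v (Iic x) = gaussianReal 0 v (Iic (x - μ)) := by
  have hcenter : (gaussianReal μ v).map (· - μ) = gaussianReal 0 v := by
    simpa using gaussianReal_map_sub_const (μ := μ) (v := v) μ
  rw [← hcenter, Measure.map_apply (by fun_prop) measurableSet_Iic]
  congr 1
  ext y
  simp

lemma gaussianReal_zero_Ioi_eq_Iio_neg (v : ℝ≥0) (c : ℝ) :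
    gaussianReal 0 v (Ioi c) = gaussianReal 0 v (Iio (-c)) := by
  have hsymm : (gaussianReal 0 v).map (fun x ↦ -x) = gaussianReal 0 v := by
    simpa using gaussianReal_map_neg (μ := 0) (v := v)
  conv_lhs => rw [← hsymm]
  rw [Measure.map_apply (by fun_prop) measurableSet_Ioi]
  congr 1
  ext y
  simp

theorem gaussian_shift_coupling_upper_general (γ : ℝ)
    (W : Measure (ℝ × ℝ))
    (h1 : W.map Prod.fst = gaussianReal 0 1)
    (h2 : W.map Prod.snd = gaussianReal γ 1) :
    W {p : ℝ × ℝ | p.1 = p.2} ≤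
      2 * (gaussianReal 0 1) (Set.Iic (-γ / 2)) := by
  calc W {p : ℝ × ℝ | p.1 = p.2}
      ≤ W (Prod.snd ⁻¹' Iic (γ / 2)) + W (Prod.fst ⁻¹' Ioi (γ / 2)) :=
        measure_diagonal_le_snd_Iic_add_fst_Ioi W (γ / 2)
    _ = gaussianReal γ 1 (Iic (γ / 2)) + gaussianReal 0 1 (Ioi (γ / 2)) := by
        rw [← h1, ← h2, Measure.map_apply measurable_snd measurableSet_Iic,
          Measure.map_apply measurable_fst measurableSet_Ioi]
    _ ≤ gaussianReal 0 1 (Iic (-γ / 2)) + gaussianReal 0 1 (Iic (-γ / 2)) := by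
        rw [gaussianReal_Iic_eq_gaussianReal_zero_Iic_sub, gaussianReal_zero_Ioi_eq_Iio_neg,
          show γ / 2 - γ = -γ / 2 by ring, ← neg_div]
        exact add_le_add le_rfl (measure_mono Iio_subset_Iic_self)
    _ = 2 * gaussianReal 0 1 (Iic (-γ / 2)) := (two_mul _).symm

/-- **Maximal coupling of mean-shifted Gaussians (optimality).** For `γ ≥ 0`,
every coupling `W` of `N(0,1)` and `N(γ,1)` has diagonal-event probability at
most `2 Φ(−γ/2)`, i.e. `1` minus the total variation distance. -/
theorem gaussian_shift_coupling_upper (γ : ℝ) (hγ : 0 ≤ γ)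
    (W : Measure (ℝ × ℝ)) (hW : IsProbabilityMeasure W)
    (h1 : W.map Prod.fst = gaussianReal 0 1)
    (h2 : W.map Prod.snd = gaussianReal γ 1) :
    W {p : ℝ × ℝ | p.1 = p.2} ≤
      2 * (gaussianReal 0 1) (Set.Iic (-γ / 2)) :=
  gaussian_shift_coupling_upper_general γ W h1 h2
end

section
/- For every γ ≥ 0 and every measurable set s ⊆ ℝ, (gaussianReal 0 1) s ≤ (gaussianReal γ 1) s + (gaussianReal 0 1) (Set.Ioc (−γ/2) (γ/2)). -/
open MeasureTheory ProbabilityTheory Set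
open scoped NNReal ENNReal

/-!
The density of `N(0,1)` dominates that of `N(γ,1)` exactly on `Iic (γ/2)`, so
`N(0,1) s - N(γ,1) s ≤ N(0,1) (Iic (γ/2)) - N(γ,1) (Iic (γ/2))`. Translating by `γ`,
`N(γ,1) (Iic (γ/2)) = N(0,1) (Iic (-γ/2))`, and the right-hand side becomes
`N(0,1) (Ioc (-γ/2) (γ/2))`.
-/

/-- Subtraction-free form of `μ s - ν s ≤ μ t - ν t`: the excess of `μ` over `ν` is largest on
the set where `μ` dominates. -/
theorem measure_add_le_add_of_le_on_of_le_on_compl {α : Type*} [MeasurableSpace α]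
    {μ ν : Measure α} {t : Set α} (ht : MeasurableSet t) (h_le : ∀ u ⊆ t, ν u ≤ μ u)
    (h_ge : ∀ u ⊆ tᶜ, μ u ≤ ν u) (s : Set α) :
    μ s + ν t ≤ ν s + μ t := by
  set u := toMeasurable ν s
  have hu : MeasurableSet u := measurableSet_toMeasurable ν s
  calc μ s + ν t
      ≤ μ u + ν t := by gcongr; exact subset_toMeasurable ν s
    _ = μ (u ∩ t) + μ (u \ t) + (ν (t ∩ u) + ν (t \ u)) := by
      rw [measure_inter_add_sdiff u ht, measure_inter_add_sdiff t hu]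
    _ ≤ μ (u ∩ t) + ν (u \ t) + (ν (t ∩ u) + μ (t \ u)) := by
      gcongr μ (u ∩ t) + ?_ + (ν (t ∩ u) + ?_)
      · exact h_ge _ fun x hx ↦ hx.2
      · exact h_le _ sdiff_subset
    _ = ν (u ∩ t) + ν (u \ t) + (μ (t ∩ u) + μ (t \ u)) := by
      rw [inter_comm t u]; ring
    _ = ν s + μ t := by
      rw [measure_inter_add_sdiff u ht, measure_inter_add_sdiff t hu, measure_toMeasurable]

theorem gaussianReal_apply_le_of_forall_sq_le {m m' : ℝ} {v : ℝ≥0} (hv : v ≠ 0) {u : Set ℝ}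
    (h : ∀ x ∈ u, (x - m') ^ 2 ≤ (x - m) ^ 2) :
    gaussianReal m v u ≤ gaussianReal m' v u := by
  rw [gaussianReal_apply m hv, gaussianReal_apply m' hv]
  refine setLIntegral_mono (measurable_gaussianPDF m' v) fun x hx ↦ ?_
  unfold gaussianPDF gaussianPDFReal
  gcongr ENNReal.ofReal (_ * Real.exp (-?_ / _))
  exact h x hx

theorem gaussianReal_add_apply (m y : ℝ) (v : ℝ≥0) {s : Set ℝ} (hs : MeasurableSet s) :
    gaussianReal (m + y) v s = gaussianReal m v ((· + y) ⁻¹' s) := by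
  rw [← gaussianReal_map_add_const, Measure.map_apply (measurable_add_const y) hs]

theorem gaussian_shift_tv_bound_general (γ : ℝ) (hγ : 0 ≤ γ)
    (s : Set ℝ) :
    (gaussianReal 0 1) s ≤
      (gaussianReal γ 1) s + (gaussianReal 0 1) (Set.Ioc (-γ / 2) (γ / 2)) := by
  have key := measure_add_le_add_of_le_on_of_le_on_compl (μ := gaussianReal 0 1)
    (ν := gaussianReal γ 1) (measurableSet_Iic (a := γ / 2))
    (fun u hu ↦ gaussianReal_apply_le_of_forall_sq_le one_ne_zero fun x hx ↦ by
      have : x ≤ γ / 2 := hu hx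
      nlinarith)
    (fun u hu ↦ gaussianReal_apply_le_of_forall_sq_le one_ne_zero fun x hx ↦ by
      have : γ / 2 < x := not_le.mp (hu hx)
      nlinarith) s
  have h_shift : gaussianReal γ 1 (Iic (γ / 2)) = gaussianReal 0 1 (Iic (-γ / 2)) := by
    rw [← zero_add γ, gaussianReal_add_apply 0 γ 1 measurableSet_Iic, preimage_add_const_Iic]
    congr 2
    ring
  have h_split : gaussianReal 0 1 (Iic (γ / 2))
      = gaussianReal 0 1 (Iic (-γ / 2)) + gaussianReal 0 1 (Ioc (-γ / 2) (γ / 2)) := by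
    rw [← measure_union (Iic_disjoint_Ioc le_rfl) measurableSet_Ioc,
      Iic_union_Ioc_eq_Iic (by linarith)]
  rw [h_shift, h_split, ← add_assoc, add_right_comm] at key
  exact (ENNReal.add_le_add_iff_right (measure_ne_top _ _)).mp key

/-- **Gaussian shift total-variation bound.** For `γ ≥ 0` and every
measurable set `s`, `N(0,1)(s) ≤ N(γ,1)(s) + N(0,1)(Ioc(−γ/2, γ/2))`. -/
theorem gaussian_shift_tv_bound (γ : ℝ) (hγ : 0 ≤ γ)
    (s : Set ℝ) (hs : MeasurableSet s) :
    (gaussianReal 0 1) s ≤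
      (gaussianReal γ 1) s + (gaussianReal 0 1) (Set.Ioc (-γ / 2) (γ / 2)) :=
  gaussian_shift_tv_bound_general γ hγ s
end
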